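/- If M and N are rectangle persistence modules with rectangles (a₁,b₁)×(a₂,b₂) and (c₁,d₁)×(c₂,d₂) that are ε-interleaved via morphisms f: M → N(ε) and g: N → M(ε), and at least one of f, g is the zero morphism, then ε ≥ max{ min_i (b_i−a_i)/2 , min_i (d_i−c_i)/2 }. -/

import Mathlib

open Classical

noncomputable section

/-- A point of the parameter space `ℝⁿ`. -/
abbrev Pt (n : ℕ) := Fin n → ℝ

/-- Shift of a point by the diagonal vector `(ε, …, ε)`. -/
def shiftPt {n : ℕ} (u : Pt n) (ε : ℝ) : Pt n := fun i => u i + ε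

lemma shiftPt_mono {n : ℕ} {u v : Pt n} (ε : ℝ) (h : u ≤ v) :
    shiftPt u ε ≤ shiftPt v ε := fun i => by simp only [shiftPt]; linarith [h i]

lemma le_shiftPt {n : ℕ} (u : Pt n) {ε : ℝ} (hε : 0 ≤ ε) : u ≤ shiftPt u ε :=
  fun i => le_add_of_nonneg_right hε

/-- An `n`-parameter persistence module over the field `k`. -/
structure PersMod (k : Type) [Field k] (n : ℕ) where
  obj : Pt n → Type
  [acg : ∀ u, AddCommGroup (obj u)]
  [mod : ∀ u, Module k (obj u)]
  map : ∀ {u v : Pt n}, u ≤ v → (obj u →ₗ[k] obj v)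
  map_id : ∀ u : Pt n, map (le_refl u) = LinearMap.id
  map_comp : ∀ {u v w : Pt n} (h1 : u ≤ v) (h2 : v ≤ w),
    (map h2).comp (map h1) = map (h1.trans h2)

attribute [instance] PersMod.acg PersMod.mod

variable {k : Type} [Field k] {n : ℕ}

/-- A morphism of persistence modules. -/
structure PersHom (M N : PersMod k n) where
  app : ∀ u, M.obj u →ₗ[k] N.obj u
  natural : ∀ {u v : Pt n} (h : u ≤ v),
    (app v).comp (M.map h) = (N.map h).comp (app u)

/-- A morphism is trivial when every component is the zero map. -/
def PersHom.Trivial {M N : PersMod k n} (f : PersHom M N) : Prop := ∀ u, f.app u = 0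

/-- The `ε`-shift of a persistence module. -/
def PersMod.shift (M : PersMod k n) (ε : ℝ) : PersMod k n where
  obj u := M.obj (shiftPt u ε)
  map h := M.map (shiftPt_mono ε h)
  map_id u := M.map_id _
  map_comp h1 h2 := M.map_comp _ _

/-- `(f, g)` is an `ε`-interleaving pair between `M` and `N`. -/
def IsInterleavingPair (M N : PersMod k n) (ε : ℝ) (hε : 0 ≤ ε)
    (f : PersHom M (N.shift ε)) (g : PersHom N (M.shift ε)) : Prop :=
  (∀ u : Pt n, (g.app (shiftPt u ε)).comp (f.app u) =
      M.map ((le_shiftPt u hε).trans (le_shiftPt _ hε))) ∧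
  (∀ u : Pt n, (f.app (shiftPt u ε)).comp (g.app u) =
      N.map ((le_shiftPt u hε).trans (le_shiftPt _ hε)))

/-- `M` and `N` are `ε`-interleaved. -/
def Interleaved (M N : PersMod k n) (ε : ℝ) : Prop :=
  ∃ (hε : 0 ≤ ε) (f : PersHom M (N.shift ε)) (g : PersHom N (M.shift ε)),
    IsInterleavingPair M N ε hε f g

/-- The interleaving distance, with value in the extended reals. -/
def interleavingDist (M N : PersMod k n) : EReal :=
  sInf {x : EReal | ∃ ε : ℝ, Interleaved M N ε ∧ x = (ε : EReal)}

/-- `M` is `ε`-trivial : all transition maps `M_u → M_{u+(ε,…,ε)}` vanish. -/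
def EpsTrivial (M : PersMod k n) (ε : ℝ) : Prop :=
  ∀ (u : Pt n) (h : u ≤ shiftPt u ε), M.map h = 0

/-- The zero persistence module. -/
def ZeroMod (k : Type) [Field k] (n : ℕ) : PersMod k n where
  obj _ := PUnit
  map _ := 0
  map_id _ := by apply LinearMap.ext; intro x; exact Subsingleton.elim _ _
  map_comp _ _ := by apply LinearMap.ext; intro x; exact Subsingleton.elim _ _

/-- The space at `u` of the interval module on `I` : all of `k` if `u ∈ I`, `0` otherwise. -/
def segSpace (k : Type) [Field k] {n : ℕ} (I : Set (Pt n)) (u : Pt n) : Submodule k k where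
  carrier := {x | u ∉ I → x = 0}
  add_mem' := by intro x y hx hy h; simp only [Set.mem_setOf_eq] at *; rw [hx h, hy h, add_zero]
  zero_mem' := fun _ => rfl
  smul_mem' := by intro c x hx h; simp only [Set.mem_setOf_eq] at *; rw [hx h, smul_zero]

/-- The interval persistence module on an order-convex set `I` : `k` on `I` with identity
internal transition maps, `0` elsewhere. -/
def IntervalMod (k : Type) [Field k] {n : ℕ} (I : Set (Pt n)) (hI : I.OrdConnected) :
    PersMod k n where
  obj u := segSpace k I u
  map {u v} h :=
    { toFun := fun x => ⟨if v ∈ I then (x : k) else 0, by intro hv; simp [hv]⟩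
      map_add' := by intro x y; apply Subtype.ext; by_cases hv : v ∈ I <;> simp [hv]
      map_smul' := by intro c x; apply Subtype.ext; by_cases hv : v ∈ I <;> simp [hv] }
  map_id u := by
    apply LinearMap.ext; intro x
    apply Subtype.ext
    by_cases hu : u ∈ I
    · simp [hu]
    · simp [hu, x.2 hu]
  map_comp {u v w} h1 h2 := by
    apply LinearMap.ext; intro x
    apply Subtype.ext
    by_cases hw : w ∈ I
    · by_cases hv : v ∈ I
      · simp [hw, hv]
      · by_cases hu : u ∈ I
        · exact absurd (hI.out hu hw ⟨h1, h2⟩) hv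
        · simp [hw, hv, x.2 hu]
    · simp [hw]

/-- The open box `∏ᵢ (aᵢ, bᵢ)` with extended-real endpoints. -/
def box {n : ℕ} (a b : Fin n → EReal) : Set (Pt n) :=
  {u | ∀ i, a i < (u i : EReal) ∧ (u i : EReal) < b i}

lemma box_ordConnected {n : ℕ} (a b : Fin n → EReal) : (box a b).OrdConnected := by
  constructor
  intro u hu w hw v hv i
  exact ⟨lt_of_lt_of_le (hu i).1 (by exact_mod_cast hv.1 i),
    lt_of_le_of_lt (by exact_mod_cast hv.2 i) (hw i).2⟩

/-- The rectangle persistence module with underlying open rectangle `∏ᵢ (aᵢ, bᵢ)`. -/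
def RectMod (k : Type) [Field k] {n : ℕ} (a b : Fin n → EReal) : PersMod k n :=
  IntervalMod k (box a b) (box_ordConnected a b)

/-- Subtraction of extended reals with the conventions `(±∞) − (±∞) = 0`. -/
def esub (x y : EReal) : EReal :=
  if (x = ⊤ ∧ y = ⊤) ∨ (x = ⊥ ∧ y = ⊥) then 0 else x - y

/-- Absolute value on the extended reals (`|±∞| = +∞`). -/
def eabs (x : EReal) : EReal := max x (-x)

/-- The `ℓ^∞`-distance `‖x − y‖_∞` on extended `ℝⁿ`. -/
def supDist {n : ℕ} (x y : Fin n → EReal) : EReal := ⨆ i, eabs (esub (x i) (y i))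

/-- The closed formula for the interleaving distance between the rectangle modules with
rectangles `∏ (aᵢ, bᵢ)` and `∏ (cᵢ, dᵢ)`. -/
def dIFormula {n : ℕ} (a b c d : Fin n → EReal) : EReal :=
  min (max (⨅ i, esub (b i) (a i) / 2) (⨅ i, esub (d i) (c i) / 2))
      (max (supDist c a) (supDist d b))

/-- `M` and `N` are isomorphic persistence modules. -/
def PersIso (M N : PersMod k n) : Prop :=
  ∃ f : PersHom M N, ∀ u, Function.Bijective (f.app u)

/-- `M` is a non-zero persistence module. -/
def PersMod.Nonzero (M : PersMod k n) : Prop := ∃ (u : Pt n) (x : M.obj u), x ≠ 0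

/-- Direct sum of two persistence modules. -/
def dirSum (M N : PersMod k n) : PersMod k n where
  obj u := M.obj u × N.obj u
  map h := (M.map h).prodMap (N.map h)
  map_id u := by
    apply LinearMap.ext; intro x
    show ((M.map (le_refl u)) x.1, (N.map (le_refl u)) x.2) = x
    rw [M.map_id, N.map_id]; rfl
  map_comp h1 h2 := by
    apply LinearMap.ext; intro x
    show ((M.map _) ((M.map _) x.1), (N.map _) ((N.map _) x.2))
      = ((M.map _) x.1, (N.map _) x.2)
    have hM : (M.map h2) ((M.map h1) x.1) = (M.map (h1.trans h2)) x.1 := by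
      rw [← M.map_comp h1 h2]; rfl
    have hN : (N.map h2) ((N.map h1) x.2) = (N.map (h1.trans h2)) x.2 := by
      rw [← N.map_comp h1 h2]; rfl
    rw [hM, hN]

/-- Zigzag-connectedness of a subset of `ℝⁿ`. -/
def ZigzagConnected {n : ℕ} (I : Set (Pt n)) : Prop :=
  ∀ u ∈ I, ∀ v ∈ I,
    Relation.ReflTransGen (fun x y => x ∈ I ∧ y ∈ I ∧ (x ≤ y ∨ y ≤ x)) u v

/-- `I` is an interval in `ℝⁿ`: nonempty, order-convex and zigzag-connected. -/
def IsInterval {n : ℕ} (I : Set (Pt n)) : Prop :=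
  I.Nonempty ∧ I.OrdConnected ∧ ZigzagConnected I

/-- A partial multibijection `Fin m ⇸ Fin k'`, encoded by an `Option`-valued map that is
injective on matched indices. -/
def PartialInj {m k' : ℕ} (σ : Fin m → Option (Fin k')) : Prop :=
  ∀ i j l, σ i = some l → σ j = some l → i = j

/-- `σ` is an `ε`-matching between the barcodes `A` and `B` (families of intervals). -/
def IsEpsMatching (k : Type) [Field k] {n m k' : ℕ}
    (A : Fin m → Set (Pt n)) (hA : ∀ i, (A i).OrdConnected)
    (B : Fin k' → Set (Pt n)) (hB : ∀ j, (B j).OrdConnected)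
    (σ : Fin m → Option (Fin k')) (ε : ℝ) : Prop :=
  PartialInj σ ∧
  (∀ i, σ i = none → EpsTrivial (IntervalMod k (A i) (hA i)) (2 * ε)) ∧
  (∀ j, (∀ i, σ i ≠ some j) → EpsTrivial (IntervalMod k (B j) (hB j)) (2 * ε)) ∧
  (∀ i j, σ i = some j →
    Interleaved (IntervalMod k (A i) (hA i)) (IntervalMod k (B j) (hB j)) ε)

/-- The bottleneck distance between the interval decomposable modules with barcodes
`A` and `B`. -/
def bottleneckDist (k : Type) [Field k] {n m k' : ℕ}
    (A : Fin m → Set (Pt n)) (hA : ∀ i, (A i).OrdConnected)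
    (B : Fin k' → Set (Pt n)) (hB : ∀ j, (B j).OrdConnected) : EReal :=
  sInf {x : EReal | ∃ (ε : ℝ) (σ : Fin m → Option (Fin k')),
    0 ≤ ε ∧ IsEpsMatching k A hA B hB σ ε ∧ x = (ε : EReal)}

/-! If `f` or `g` vanishes, then so do the composites `g(ε) ∘ f` and `f(ε) ∘ g`, which the
interleaving identifies with the `2ε`-transition maps of `M` and `N`: both modules are
`2ε`-trivial. But if every side of a rectangle is longer than `2ε`, it contains a point `u`
together with `u + (2ε, 2ε)`, and the transition map between them is the identity of `k`. -/

lemma exists_real_lt_add_lt_of_lt_esub {a b : EReal} {δ : ℝ} (hδ : 0 ≤ δ)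
    (h : (δ : EReal) < esub b a) : ∃ x : ℝ, a < x ∧ ((x + δ : ℝ) : EReal) < b := by
  have hpos : 0 < esub b a := (EReal.coe_nonneg.2 hδ).trans_lt h
  have ha : a ≠ ⊤ := by
    rintro rfl
    revert hpos; unfold esub; split_ifs <;> simp [EReal.sub_top]
  have hb : b ≠ ⊥ := by
    rintro rfl
    revert hpos; unfold esub; split_ifs <;> simp [EReal.bot_sub]
  rw [show esub b a = b - a from if_neg (by tauto),
    EReal.lt_sub_iff_add_lt (.inr (EReal.coe_ne_top δ)) (.inl ha)] at h
  obtain ⟨y, hy, hyb⟩ := EReal.lt_iff_exists_real_btwn.1 h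
  refine ⟨y - δ, ?_, by simpa using hyb⟩
  rw [EReal.coe_sub,
    EReal.lt_sub_iff_add_lt (.inl (EReal.coe_ne_bot δ)) (.inl (EReal.coe_ne_top δ))]
  rwa [add_comm]

lemma IntervalMod.map_ne_zero {I : Set (Pt n)} (hI : I.OrdConnected) {u v : Pt n} (h : u ≤ v)
    (hu : u ∈ I) (hv : v ∈ I) : (IntervalMod k I hI).map h ≠ 0 := by
  intro hzero
  have := congrArg Subtype.val (LinearMap.congr_fun hzero ⟨1, fun hu' => absurd hu hu'⟩)
  change (if v ∈ I then (1 : k) else 0) = 0 at this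
  simp [hv] at this

lemma RectMod.not_epsTrivial_of_lt_esub {a b : Fin n → EReal} {δ : ℝ} (hδ : 0 ≤ δ)
    (hlt : ∀ i, (δ : EReal) < esub (b i) (a i)) : ¬ EpsTrivial (RectMod k a b) δ := by
  intro h
  choose x hxa hxb using fun i => exists_real_lt_add_lt_of_lt_esub hδ (hlt i)
  have hx_le : ∀ i, ((x i : ℝ) : EReal) ≤ ((x i + δ : ℝ) : EReal) := fun i =>
    EReal.coe_le_coe_iff.2 (le_add_of_nonneg_right hδ)
  have hx : x ∈ box a b := fun i => ⟨hxa i, (hx_le i).trans_lt (hxb i)⟩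
  have hxδ : shiftPt x δ ∈ box a b := fun i => ⟨(hxa i).trans_le (hx_le i), hxb i⟩
  exact IntervalMod.map_ne_zero _ (le_shiftPt x hδ) hx hxδ (h x _)

lemma RectMod.iInf_esub_div_two_le_of_epsTrivial {a b : Fin n → EReal} {ε : ℝ} (hε : 0 ≤ ε)
    (h : EpsTrivial (RectMod k a b) (2 * ε)) : ⨅ i, esub (b i) (a i) / 2 ≤ ε := by
  by_contra! hlt
  refine RectMod.not_epsTrivial_of_lt_esub (by positivity) (fun i => ?_) h
  have hi := hlt.trans_le (iInf_le _ i)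
  rw [EReal.lt_div_iff two_pos (by decide)] at hi
  rwa [EReal.coe_mul, mul_comm]

section Interleaving

variable {M N : PersMod k n} {ε : ℝ} {hε : 0 ≤ ε} {f : PersHom M (N.shift ε)}
  {g : PersHom N (M.shift ε)}

lemma IsInterleavingPair.symm (hfg : IsInterleavingPair M N ε hε f g) :
    IsInterleavingPair N M ε hε g f :=
  ⟨hfg.2, hfg.1⟩

lemma IsInterleavingPair.epsTrivial_of_trivial (hfg : IsInterleavingPair M N ε hε f g)
    (htriv : f.Trivial ∨ g.Trivial) : EpsTrivial M (2 * ε) := by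
  intro u h
  have hshift : shiftPt (shiftPt u ε) ε = shiftPt u (2 * ε) := by
    ext i; simp only [shiftPt]; ring
  have hgf : (g.app (shiftPt u ε)).comp (f.app u) = 0 := by
    rcases htriv with hf | hg
    · rw [hf u]; exact LinearMap.comp_zero _
    · rw [hg _]; exact LinearMap.zero_comp _
  rw [← M.map_comp ((le_shiftPt u hε).trans (le_shiftPt _ hε)) hshift.le, ← hfg.1 u, hgf]
  exact LinearMap.comp_zero _

end Interleaving

theorem eps_ge_of_trivial_interleaving_general (a b c d : Fin 2 → EReal)
    (ε : ℝ) (hε : 0 ≤ ε)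
    (f : PersHom (RectMod k a b) ((RectMod k c d).shift ε))
    (g : PersHom (RectMod k c d) ((RectMod k a b).shift ε))
    (hfg : IsInterleavingPair (RectMod k a b) (RectMod k c d) ε hε f g)
    (htriv : f.Trivial ∨ g.Trivial) :
    max (⨅ i, esub (b i) (a i) / 2) (⨅ i, esub (d i) (c i) / 2) ≤ (ε : EReal) :=
  max_le (RectMod.iInf_esub_div_two_le_of_epsTrivial hε (hfg.epsTrivial_of_trivial htriv))
    (RectMod.iInf_esub_div_two_le_of_epsTrivial hε (hfg.symm.epsTrivial_of_trivial htriv.symm))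

theorem eps_ge_of_trivial_interleaving (a b c d : Fin 2 → EReal)
    (ha : ∀ i, a i ≠ ⊤) (hb : ∀ i, b i ≠ ⊥)
    (hc : ∀ i, c i ≠ ⊤) (hd : ∀ i, d i ≠ ⊥) (hab : ∀ i, a i < b i) (hcd : ∀ i, c i < d i)
    (ε : ℝ) (hε : 0 ≤ ε)
    (f : PersHom (RectMod k a b) ((RectMod k c d).shift ε))
    (g : PersHom (RectMod k c d) ((RectMod k a b).shift ε))
    (hfg : IsInterleavingPair (RectMod k a b) (RectMod k c d) ε hε f g)
    (htriv : f.Trivial ∨ g.Trivial) :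
    max (⨅ i, esub (b i) (a i) / 2) (⨅ i, esub (d i) (c i) / 2) ≤ (ε : EReal) :=
  eps_ge_of_trivial_interleaving_general a b c d ε hε f g hfg htriv

end
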